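/- arXiv:2012.07837 — 2 statements merged into one kernel-verified Lean document; each statement's English description precedes it below -/
import Mathlib

section
/- Let M > 0 and let f = h + conj(g) belong to the class P⁰_H(M), with power series h(z) = z + Σ_{n=2}^∞ a_n zⁿ and g(z) = Σ_{n=2}^∞ b_n zⁿ. Then for every integer n ≥ 2 one has | |a_n| − |b_n| | ≤ 2M/(n(n−1)). -/
open Filter MeasureTheory

/-- Euclidean distance from `f 0` to the boundary of `f(𝔻)`, defined as
`liminf_{|z| → 1⁻} |f z - f 0|`. -/
noncomputable def bdyDist (f : ℂ → ℂ) : ℝ :=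
  Filter.liminf (fun z : ℂ => ‖f z - f 0‖)
    (Filter.comap (fun z : ℂ => ‖z‖) (nhdsWithin 1 (Set.Iio 1)))

/-- `f = h + conj g` belongs to the class `P⁰_H(M)`:  `h z = z + ∑_{n≥2} a n * z^n`,
`g z = ∑_{n≥2} b n * z^n` on the unit disk, and `Re (z h''(z)) > -M + |z g''(z)|` there. -/
def PH0 (M : ℝ) (a b : ℕ → ℂ) (h g : ℂ → ℂ) : Prop :=
  (∀ z ∈ Metric.ball (0 : ℂ) 1,
      HasSum (fun n : ℕ => a (n + 2) * z ^ (n + 2)) (h z - z)) ∧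
  (∀ z ∈ Metric.ball (0 : ℂ) 1,
      HasSum (fun n : ℕ => b (n + 2) * z ^ (n + 2)) (g z)) ∧
  (∀ z ∈ Metric.ball (0 : ℂ) 1,
      -M + ‖z * deriv (deriv g) z‖ < (z * deriv (deriv h) z).re)

/-!
For every unimodular `ε`, the hypothesis `Re (z h'') > -M + |z g''|` makes
`q = M + z h'' + ε z g''` a function with positive real part on the disc, with Taylor coefficients
`q₀ = M` and `q_{n-1} = n (n - 1) (a_n + ε b_n)`. Carathéodory's lemma `|q_k| ≤ 2 Re q₀` gives
`n (n - 1) |a_n + ε b_n| ≤ 2M`, and `ε` can be rotated so that `|a_n + ε b_n| = ||a_n| - |b_n||`.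

Carathéodory's lemma reduces to `k = 1` by averaging `q` over the `k`-th roots of unity, which
leaves a function of `z^k` with coefficients `q_{jk}`; for `k = 1` it is the Schwarz lemma for the
Cayley transform `(q - q₀) / (q + conj q₀)`, which maps the disc into itself.
-/

open Metric FormalMultilinearSeries Complex ComplexConjugate Finset

lemma hasFPowerSeriesOnBall_ofScalars_of_hasSum {c : ℕ → ℂ} {F : ℂ → ℂ} {r : NNReal} (hr : 0 < r)
    (hF : ∀ z ∈ ball (0 : ℂ) r, HasSum (fun n ↦ c n * z ^ n) (F z)) :
    HasFPowerSeriesOnBall F (ofScalars ℂ c) 0 r where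
  r_le := by
    refine ENNReal.le_of_forall_nnreal_lt fun t ht ↦ ?_
    have ht' : (t : ℂ) ∈ ball (0 : ℂ) r := by simpa using ht
    refine le_radius_of_tendsto _ (l := 0) ?_
    simpa [ofScalars_norm] using (hF _ ht').summable.tendsto_atTop_zero.norm
  r_pos := by exact_mod_cast hr
  hasSum {y} hy := by
    simpa [ofScalars_apply_eq, mul_comm] using hF y (by simpa using hy)

lemma iteratedDeriv_eq_factorial_mul_of_hasFPowerSeriesAt {𝕜 : Type*} [RCLike 𝕜] {c : ℕ → 𝕜}
    {F : 𝕜 → 𝕜} {x : 𝕜} (hF : HasFPowerSeriesAt F (ofScalars 𝕜 c) x) (n : ℕ) :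
    iteratedDeriv n F x = n.factorial * c n := by
  have h := congrArg (coeff · n) (hF.eq_formalMultilinearSeries hF.analyticAt.hasFPowerSeriesAt)
  simp only [coeff_ofScalars] at h
  rw [h, mul_div_cancel₀ _ (Nat.cast_ne_zero.mpr n.factorial_ne_zero)]

lemma hasSum_deriv_of_hasSum {c : ℕ → ℂ} {F : ℂ → ℂ} {r : ℝ}
    (hF : ∀ z ∈ ball (0 : ℂ) r, HasSum (fun n ↦ c n * z ^ n) (F z)) {z : ℂ} (hz : z ∈ ball 0 r) :
    HasSum (fun n ↦ (n + 1) * c (n + 1) * z ^ n) (deriv F z) := by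
  lift r to NNReal using (pos_of_mem_ball hz).le
  have hps := hasFPowerSeriesOnBall_ofScalars_of_hasSum (by exact_mod_cast pos_of_mem_ball hz) hF
  have hd : DifferentiableOn ℂ (deriv F) (ball 0 r) :=
    (hps.differentiableOn.mono (by simp)).deriv isOpen_ball
  convert! Complex.hasSum_taylorSeries_on_ball hd hz using 1
  funext n
  rw [← iteratedDeriv_succ', iteratedDeriv_eq_factorial_mul_of_hasFPowerSeriesAt hps.hasFPowerSeriesAt,
    Nat.factorial_succ, sub_zero, smul_eq_mul, smul_eq_mul]
  have : (n.factorial : ℂ) ≠ 0 := Nat.cast_ne_zero.mpr n.factorial_ne_zero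
  push_cast
  field_simp

lemma hasSum_mul_deriv_deriv_of_hasSum {c : ℕ → ℂ} {F : ℂ → ℂ} {r : ℝ}
    (hF : ∀ z ∈ ball (0 : ℂ) r, HasSum (fun n ↦ c n * z ^ n) (F z)) {z : ℂ} (hz : z ∈ ball 0 r) :
    HasSum (fun n ↦ n * (n + 1) * c (n + 1) * z ^ n) (z * deriv (deriv F) z) := by
  have h := (hasSum_deriv_of_hasSum (fun w hw ↦ hasSum_deriv_of_hasSum hF hw) hz).mul_left z
  rw [← hasSum_nat_add_iff' 1, sum_range_one, CharP.cast_eq_zero, zero_mul, zero_mul,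
    zero_mul, sub_zero]
  convert! h using 2 with n
  push_cast
  ring

lemma hasSum_mul_deriv_deriv_of_hasSum_nat_add_two {a : ℕ → ℂ} {F : ℂ → ℂ} {r : ℝ} (a₀ a₁ : ℂ)
    (hF : ∀ z ∈ ball (0 : ℂ) r, HasSum (fun n ↦ a (n + 2) * z ^ (n + 2)) (F z - (a₀ + a₁ * z)))
    {z : ℂ} (hz : z ∈ ball 0 r) :
    HasSum (fun n ↦ n * (n + 1) * a (n + 1) * z ^ n) (z * deriv (deriv F) z) := by
  have hF' (w : ℂ) (hw : w ∈ ball 0 r) :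
      HasSum (fun n ↦ (if n = 0 then a₀ else if n = 1 then a₁ else a n) * w ^ n) (F w) := by
    rw [← hasSum_nat_add_iff' 2]
    simpa [sum_range_succ] using hF w hw
  refine (hasSum_mul_deriv_deriv_of_hasSum hF' hz).congr_fun fun n ↦ ?_
  rcases n with _ | n <;> simp

lemma norm_sub_le_norm_add_conj {w a : ℂ} (hw : 0 ≤ w.re) (ha : 0 ≤ a.re) :
    ‖w - a‖ ≤ ‖w + conj a‖ := by
  rw [← sq_le_sq₀ (norm_nonneg _) (norm_nonneg _), Complex.sq_norm, Complex.sq_norm]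
  simp only [normSq_apply, sub_re, sub_im, add_re, add_im, conj_re, conj_im]
  nlinarith [mul_nonneg hw ha]

lemma norm_deriv_le_two_mul_re_div_of_re_pos {Q : ℂ → ℂ} {c : ℂ} {R : ℝ}
    (hQ : DifferentiableOn ℂ Q (ball c R)) (hre : ∀ w ∈ ball c R, 0 < (Q w).re) (hR : 0 < R) :
    ‖deriv Q c‖ ≤ 2 * (Q c).re / R := by
  have hc : c ∈ ball c R := mem_ball_self hR
  have hQc : 0 < (Q c).re := hre c hc
  have hden : ∀ w ∈ ball c R, Q w + conj (Q c) ≠ 0 := fun w hw h0 ↦ by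
    have := congrArg re h0
    simp only [add_re, conj_re, zero_re] at this
    linarith [hre w hw]
  set φ : ℂ → ℂ := fun w ↦ (Q w - Q c) / (Q w + conj (Q c))
  have hφ : DifferentiableOn ℂ φ (ball c R) := (hQ.sub_const _).div (hQ.add_const _) hden
  have hmaps : Set.MapsTo φ (ball c R) (closedBall (φ c) 1) := fun w hw ↦ by
    simpa [φ, norm_div] using div_le_one_of_le₀
      (norm_sub_le_norm_add_conj (hre w hw).le hQc.le) (norm_nonneg _)
  have hderiv : deriv φ c = deriv Q c / (2 * (Q c).re) := by
    have hQd := (hQ.differentiableAt (isOpen_ball.mem_nhds hc)).hasDerivAt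
    have hφd : HasDerivAt φ _ c := (hQd.sub_const (Q c)).div (hQd.add_const _) (hden c hc)
    rw [hφd.deriv, sub_self, zero_mul, sub_zero, add_conj]
    have : ((Q c).re : ℂ) ≠ 0 := ofReal_ne_zero.mpr hQc.ne'
    push_cast
    field_simp
  have h2 : ‖(2 * (Q c).re : ℂ)‖ = 2 * (Q c).re := by
    rw [← ofReal_ofNat, ← ofReal_mul, norm_real, Real.norm_of_nonneg (by positivity)]
  have := norm_deriv_le_div_of_mapsTo_ball hφ hmaps hR
  rw [hderiv, norm_div, h2, div_le_div_iff₀ (by positivity) hR] at this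
  rwa [le_div_iff₀ hR, ← one_mul (2 * (Q c).re)]

lemma IsPrimitiveRoot.sum_pow_pow_eq_ite {R : Type*} [CommRing R] [IsDomain R] {ζ : R} {k : ℕ}
    (hζ : IsPrimitiveRoot ζ k) (m : ℕ) :
    ∑ i ∈ range k, (ζ ^ i) ^ m = if k ∣ m then (k : R) else 0 := by
  simp_rw [← pow_mul, mul_comm _ m, pow_mul]
  split_ifs with hdvd
  · simp [(hζ.pow_eq_one_iff_dvd m).mpr hdvd]
  · have hne : ζ ^ m ≠ 1 := fun h ↦ hdvd ((hζ.pow_eq_one_iff_dvd m).mp h)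
    have h := geom_sum_mul (ζ ^ m) k
    rw [← pow_mul, mul_comm m k, pow_mul, hζ.pow_eq_one, one_pow, sub_self] at h
    exact (mul_eq_zero.mp h).resolve_right (sub_ne_zero.mpr hne)

lemma IsPrimitiveRoot.hasSum_inv_mul_sum_comp_mul {k : ℕ} {ζ : ℂ} (hζ : IsPrimitiveRoot ζ k)
    {p : ℕ → ℂ} {q : ℂ → ℂ} {r : ℝ} (hq : ∀ z ∈ ball (0 : ℂ) r, HasSum (fun m ↦ p m * z ^ m) (q z))
    (hk : k ≠ 0) {z : ℂ} (hz : z ∈ ball 0 r) :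
    HasSum (fun j ↦ p (j * k) * (z ^ k) ^ j) ((k : ℂ)⁻¹ * ∑ i ∈ range k, q (ζ ^ i * z)) := by
  have hmem (i : ℕ) : ζ ^ i * z ∈ ball 0 r := by
    simpa [hζ.norm'_eq_one hk] using hz
  have hsum := (hasSum_sum (s := range k) fun i _ ↦ hq _ (hmem i)).mul_left (k : ℂ)⁻¹
  have hk' : (k : ℂ) ≠ 0 := Nat.cast_ne_zero.mpr hk
  have hterm (m : ℕ) : (k : ℂ)⁻¹ * ∑ i ∈ range k, p m * (ζ ^ i * z) ^ m =
      if k ∣ m then p m * z ^ m else 0 := by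
    simp_rw [mul_pow, mul_left_comm (p m), ← sum_mul, hζ.sum_pow_pow_eq_ite]
    split_ifs <;> simp [hk']
  simp_rw [hterm] at hsum
  have hinj : Function.Injective (· * k) := fun i j hij ↦ Nat.eq_of_mul_eq_mul_right
    (Nat.pos_of_ne_zero hk) hij
  rw [← hinj.hasSum_iff (fun m hm ↦ if_neg fun ⟨j, hj⟩ ↦ hm ⟨j, by simp [hj, mul_comm]⟩)] at hsum
  convert! hsum using 2 with j
  simp [← pow_mul, mul_comm]

theorem norm_coeff_le_two_mul_re_of_hasSum {p : ℕ → ℂ} {q : ℂ → ℂ}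
    (hq : ∀ z ∈ ball (0 : ℂ) 1, HasSum (fun m ↦ p m * z ^ m) (q z))
    (hre : ∀ z ∈ ball (0 : ℂ) 1, 0 < (q z).re) {k : ℕ} (hk : k ≠ 0) :
    ‖p k‖ ≤ 2 * (p 0).re := by
  have hζ := Complex.isPrimitiveRoot_exp k hk
  set Q : ℂ → ℂ := fun w ↦ ∑' j, p (j * k) * w ^ j
  have hQ : ∀ w ∈ ball (0 : ℂ) 1, HasSum (fun j ↦ p (j * k) * w ^ j) (Q w) ∧ 0 < (Q w).re := by
    intro w hw
    obtain ⟨z, rfl⟩ := IsAlgClosed.exists_pow_nat_eq w (Nat.pos_of_ne_zero hk)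
    have hz : z ∈ ball (0 : ℂ) 1 := by
      simpa [pow_lt_one_iff_of_nonneg (norm_nonneg z) hk] using hw
    have hs := hζ.hasSum_inv_mul_sum_comp_mul hq hk hz
    refine ⟨hs.summable.hasSum, ?_⟩
    rw [show Q (z ^ k) = _ from hs.tsum_eq, ← ofReal_natCast, ← ofReal_inv, re_ofReal_mul, re_sum]
    refine mul_pos (by positivity) (sum_pos (fun i _ ↦ hre _ ?_) (nonempty_range_iff.mpr hk))
    simpa [hζ.norm'_eq_one hk] using hz
  have hps := hasFPowerSeriesOnBall_ofScalars_of_hasSum (r := 1) one_pos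
    (by simpa using fun w hw ↦ (hQ w hw).1)
  have hQ0 := iteratedDeriv_eq_factorial_mul_of_hasFPowerSeriesAt hps.hasFPowerSeriesAt 0
  have hQ'0 := iteratedDeriv_eq_factorial_mul_of_hasFPowerSeriesAt hps.hasFPowerSeriesAt 1
  rw [iteratedDeriv_zero] at hQ0
  rw [iteratedDeriv_one] at hQ'0
  have := norm_deriv_le_two_mul_re_div_of_re_pos
    (hps.differentiableOn.mono (by rw [eball_coe, NNReal.coe_one]))
    (fun w hw ↦ (hQ w hw).2) one_pos
  simpa [hQ0, hQ'0] using this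

lemma exists_norm_eq_one_norm_add_mul_eq_abs_sub (x y : ℂ) :
    ∃ ε : ℂ, ‖ε‖ = 1 ∧ ‖x + ε * y‖ = |‖x‖ - ‖y‖| := by
  set E := exp ((x.arg - y.arg : ℝ) * I)
  have he : E * exp (y.arg * I) = exp (x.arg * I) := by
    rw [← exp_add]
    push_cast
    ring_nf
  have hxy : x + -E * y = (‖x‖ - ‖y‖ : ℝ) * exp (x.arg * I) := by
    push_cast
    linear_combination (-1 : ℂ) * norm_mul_exp_arg_mul_I x + E * norm_mul_exp_arg_mul_I y
      - (‖y‖ : ℂ) * he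
  refine ⟨-E, by rw [norm_neg, norm_exp_ofReal_mul_I], ?_⟩
  rw [hxy, norm_mul, norm_exp_ofReal_mul_I, mul_one, norm_real, Real.norm_eq_abs]

theorem PH0.mul_norm_coeff_add_mul_le {M : ℝ} {a b : ℕ → ℂ} {h g : ℂ → ℂ} (hf : PH0 M a b h g)
    {ε : ℂ} (hε : ‖ε‖ = 1) {k : ℕ} (hk : k ≠ 0) :
    k * (k + 1) * ‖a (k + 1) + ε * b (k + 1)‖ ≤ 2 * M := by
  obtain ⟨ha, hb, hineq⟩ := hf
  have hzh (z) (hz : z ∈ ball (0 : ℂ) 1) :=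
    hasSum_mul_deriv_deriv_of_hasSum_nat_add_two 0 1 (by simpa using ha) hz
  have hzg (z) (hz : z ∈ ball (0 : ℂ) 1) :=
    hasSum_mul_deriv_deriv_of_hasSum_nat_add_two 0 0 (by simpa using hb) hz
  have hq (z) (hz : z ∈ ball (0 : ℂ) 1) : HasSum
      (fun n : ℕ ↦ ((if n = 0 then (M : ℂ) else 0) + n * (n + 1) * (a (n + 1) + ε * b (n + 1))) * z ^ n)
      (M + (z * deriv (deriv h) z + ε * (z * deriv (deriv g) z))) := by
    have hM : HasSum (fun n : ℕ ↦ (if n = 0 then (M : ℂ) else 0) * z ^ n) M := by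
      convert hasSum_single (f := fun n : ℕ ↦ (if n = 0 then (M : ℂ) else 0) * z ^ n) 0
        (fun n hn ↦ by simp [hn]) using 1
      simp
    exact (hM.add ((hzh z hz).add ((hzg z hz).mul_left ε))).congr_fun fun n ↦ by ring
  have hre (z) (hz : z ∈ ball (0 : ℂ) 1) :
      0 < (M + (z * deriv (deriv h) z + ε * (z * deriv (deriv g) z))).re := by
    have := neg_le_of_abs_le ((abs_re_le_norm (ε * (z * deriv (deriv g) z))).trans_eq
      (by rw [norm_mul, hε, one_mul]))
    simp only [add_re, ofReal_re]
    linarith [hineq z hz]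
  have hk1 : ‖(k : ℂ) + 1‖ = k + 1 := by exact_mod_cast norm_natCast (k + 1)
  simpa [hk, hk1] using norm_coeff_le_two_mul_re_of_hasSum hq hre hk

theorem coeff_diff_bound_general (M : ℝ) (a b : ℕ → ℂ) (h g : ℂ → ℂ)
    (hf : PH0 M a b h g) (n : ℕ) (hn : 2 ≤ n) :
    |‖a n‖ - ‖b n‖| ≤ 2 * M / ((n : ℝ) * ((n : ℝ) - 1)) := by
  obtain ⟨k, rfl⟩ : ∃ k, n = k + 1 := ⟨n - 1, by omega⟩
  have hk : 0 < k := by omega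
  obtain ⟨ε, hε, hεab⟩ := exists_norm_eq_one_norm_add_mul_eq_abs_sub (a (k + 1)) (b (k + 1))
  have hbound := hf.mul_norm_coeff_add_mul_le hε hk.ne'
  rw [hεab] at hbound
  push_cast
  rw [add_sub_cancel_right, le_div_iff₀ (mul_pos (by positivity) (Nat.cast_pos.mpr hk))]
  linarith

/-- Coefficient bound `||a_n| - |b_n|| ≤ 2M/(n(n-1))` for `f ∈ P⁰_H(M)`. -/
theorem coeff_diff_bound (M : ℝ) (hM : 0 < M) (a b : ℕ → ℂ) (h g : ℂ → ℂ)
    (hf : PH0 M a b h g) (n : ℕ) (hn : 2 ≤ n) :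
    |‖a n‖ - ‖b n‖| ≤ 2 * M / ((n : ℝ) * ((n : ℝ) - 1)) :=
  coeff_diff_bound_general M a b h g hf n hn
end

section
/- Let M > 0, let N ≥ 2 be an integer, and let r₀ ∈ (0,1) satisfy (r₀ + 2M(r₀ + (1−r₀)ln(1−r₀)))² − 1 + 2M(r₀ − 1 + (1−r₀)ln(1−r₀) − Σ_{n=2}^{N−1} r₀ⁿ/(n(n−1)) + 2 ln 2) = 0. Then for the function f_M(z) = z + 2M Σ_{n=2}^∞ zⁿ/(n(n−1)) (whose coefficients are a_n = 2M/(n(n−1)), b_n = 0), equality holds: |f_M(r₀)|² + Σ_{n=N}^∞ (2M/(n(n−1))) r₀ⁿ = 1 + 2M(1 − 2 ln 2) = d(f_M(0), ∂f_M(𝔻)). -/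
open Filter MeasureTheory

/-- The extremal function `f_M z = z + 2M ∑_{n≥2} z^n/(n(n-1))`. -/
noncomputable def fM (M : ℝ) : ℂ → ℂ :=
  fun z => z + 2 * (M : ℂ) * ∑' n : ℕ, z ^ (n + 2) / (((n : ℂ) + 2) * ((n : ℂ) + 1))

open Topology Metric ComplexConjugate

/-! On the unit disc `f_M z = (1 + 2M) z + 2M (1 - z) log (1 - z)`, which extends continuously
to the closed disc. The tail of the coefficient series at `r₀` is the full sum
`r₀ + (1 - r₀) log (1 - r₀)` minus its first terms, so the first identity is the defining
equation of `r₀`. For `|ζ| = 1` put `w = 1 - ζ`; then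
`Re (f_M ζ · conj ζ) = 1 + 2M - 2M Re (conj w · log w)`, and writing `w = 2 cos t · e^{it}`
gives `Re (conj w · log w) = 2 (cos² t log (2 cos t) + t sin t cos t) ≤ 2 log 2`, with equality
at `ζ = -1`. So `1 + 2M (1 - 2 log 2)` is the minimum of `|f_M|` on the circle, which by
continuity up to the boundary is the radial `liminf`. -/

section Trigonometric

open Real

lemma cos_sq_mul_log_add_le_log_two_of_le_cos {t : ℝ} (ht₀ : 0 ≤ t) (ht : t < π / 2)
    (hc : 0.7 ≤ cos t) :
    cos t ^ 2 * log (2 * cos t) + t * sin t * cos t ≤ log 2 := by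
  have hc₀ : 0 < cos t := by linarith
  set u := sin t ^ 2 with hu
  have hcu : cos t ^ 2 = 1 - u := by rw [hu]; linarith [sin_sq_add_cos_sq t]
  have hu₀ : 0 ≤ u := sq_nonneg _
  have hu₁ : u ≤ 0.51 := by nlinarith
  have htan : t * sin t * cos t ≤ u := by
    have h := mul_le_mul_of_nonneg_right (le_tan ht₀ ht)
      (mul_nonneg (sin_nonneg_of_nonneg_of_le_pi ht₀ (by linarith)) hc₀.le)
    rw [tan_eq_sin_div_cos] at h
    field_simp at h
    nlinarith
  have hlog : log (1 - u) ≤ -(u + u ^ 2 / 2 + u ^ 3 / 3) := by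
    have h := sum_le_hasSum (Finset.range 3) (fun n _ => by positivity)
      (hasSum_pow_div_log_of_abs_lt_one (x := u) (by rw [abs_of_nonneg hu₀]; linarith))
    simp only [Finset.sum_range_succ, Finset.sum_range_zero] at h
    norm_num at h
    linarith
  have hlog2c : log (2 * cos t) = log 2 + log (1 - u) / 2 := by
    rw [log_mul two_ne_zero hc₀.ne', ← hcu, log_pow]
    push_cast
    ring
  have hpoly : u * (1 - log 2) ≤ (1 - u) * (u + u ^ 2 / 2 + u ^ 3 / 3) / 2 := by
    nlinarith [log_two_gt_d9, mul_nonneg hu₀ (by linarith : (0 : ℝ) ≤ 0.51 - u),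
      mul_nonneg (mul_nonneg hu₀ hu₀) (by linarith : (0 : ℝ) ≤ 0.51 - u)]
  rw [hlog2c, hcu]
  nlinarith [mul_le_mul_of_nonneg_left hlog (by linarith : (0 : ℝ) ≤ 1 - u)]

lemma cos_sq_mul_log_add_le_log_two_of_cos_le {t : ℝ} (ht₀ : 0 ≤ t) (ht : t < π / 2)
    (hc : cos t ≤ 0.7) :
    cos t ^ 2 * log (2 * cos t) + t * sin t * cos t ≤ log 2 := by
  have hc₀ : 0 < cos t := cos_pos_of_mem_Ioo ⟨by linarith, ht⟩
  have hs₀ : 0 ≤ sin t := sin_nonneg_of_nonneg_of_le_pi ht₀ (by linarith [pi_pos])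
  have ht_le : t ≤ 1.575 - cos t := by
    linarith [pi_lt_d2, sin_pi_div_two_sub t ▸ sin_le (by linarith : 0 ≤ π / 2 - t)]
  have hs_le : sin t ≤ 1 - cos t ^ 2 / 2 := by
    nlinarith [sin_sq_add_cos_sq t, sq_nonneg (sin t - (1 - cos t ^ 2 / 2))]
  have hlog : log (2 * cos t) ≤ 2 * cos t - 1 := log_le_sub_one_of_pos (by positivity)
  calc cos t ^ 2 * log (2 * cos t) + t * sin t * cos t
      ≤ cos t ^ 2 * (2 * cos t - 1) + (1.575 - cos t) * (1 - cos t ^ 2 / 2) * cos t := by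
        gcongr
        linarith
    _ ≤ log 2 := by
        nlinarith [log_two_gt_d9, mul_nonneg hc₀.le (by linarith : (0 : ℝ) ≤ 0.7 - cos t),
          mul_nonneg (mul_nonneg hc₀.le hc₀.le) (by linarith : (0 : ℝ) ≤ 0.7 - cos t),
          mul_nonneg (pow_nonneg hc₀.le 3) (by linarith : (0 : ℝ) ≤ 0.7 - cos t)]

lemma cos_sq_mul_log_add_le_log_two {t : ℝ} (ht : |t| < π / 2) :
    cos t ^ 2 * log (2 * cos t) + t * sin t * cos t ≤ log 2 := by
  wlog ht₀ : 0 ≤ t generalizing t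
  · simpa [abs_neg] using this (t := -t) (by rwa [abs_neg]) (by linarith)
  rw [abs_of_nonneg ht₀] at ht
  rcases le_total (cos t) 0.7 with hc | hc
  · exact cos_sq_mul_log_add_le_log_two_of_cos_le ht₀ ht hc
  · exact cos_sq_mul_log_add_le_log_two_of_le_cos ht₀ ht hc

end Trigonometric

lemma Complex.re_conj_mul_log_le {w : ℂ} (hw : ‖w - 1‖ = 1) :
    (conj w * log w).re ≤ 2 * Real.log 2 := by
  rcases eq_or_ne w 0 with rfl | hw₀
  · simp [Real.log_nonneg one_le_two]
  have hnorm : ‖w‖ ^ 2 = 2 * w.re := by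
    have h := congrArg (· ^ 2) hw
    simp only [Complex.sq_norm, normSq_apply, sub_re, one_re, sub_im, one_im] at h ⊢
    linarith
  have hre : 0 < w.re := by nlinarith [norm_pos_iff.2 hw₀]
  set t := arg w
  have hnorm' : ‖w‖ = 2 * Real.cos t := by
    have := norm_mul_cos_arg w
    nlinarith [norm_pos_iff.2 hw₀]
  have ht : |t| < Real.pi / 2 := abs_arg_lt_pi_div_two_iff.2 (Or.inl hre)
  calc (conj w * log w).re = w.re * Real.log ‖w‖ + w.im * t := by
        simp [mul_re, log_re, log_im, t]
    _ = 2 * (Real.cos t ^ 2 * Real.log (2 * Real.cos t) + t * Real.sin t * Real.cos t) := by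
        rw [← norm_mul_cos_arg w, ← norm_mul_sin_arg w, hnorm']
        ring
    _ ≤ 2 * Real.log 2 := by linarith [cos_sq_mul_log_add_le_log_two ht]

lemma Complex.hasSum_pow_add_two_div {z : ℂ} (hz : ‖z‖ < 1) :
    HasSum (fun n : ℕ => z ^ (n + 2) / (((n : ℂ) + 2) * ((n : ℂ) + 1)))
      (z + (1 - z) * log (1 - z)) := by
  have h₁ : HasSum (fun n : ℕ => z ^ (n + 1) / ((n : ℂ) + 1)) (-log (1 - z)) := by
    simpa using (hasSum_nat_add_iff' 1).2 (hasSum_taylorSeries_neg_log hz)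
  have h₂ : HasSum (fun n : ℕ => z ^ (n + 2) / ((n : ℂ) + 2)) (-log (1 - z) - z) := by
    simpa [Finset.sum_range_succ, add_assoc, one_add_one_eq_two] using
      (hasSum_nat_add_iff' 2).2 (hasSum_taylorSeries_neg_log hz)
  have h := (h₁.mul_left z).sub h₂
  rw [show z * -log (1 - z) - (-log (1 - z) - z) = z + (1 - z) * log (1 - z) by ring] at h
  refine h.congr_fun fun n => ?_
  have hn₁ : (n : ℂ) + 1 ≠ 0 := by exact_mod_cast n.succ_ne_zero
  have hn₂ : (n : ℂ) + 2 ≠ 0 := by exact_mod_cast (n + 1).succ_ne_zero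
  field_simp
  ring

lemma Real.hasSum_pow_add_two_div {x : ℝ} (hx : |x| < 1) :
    HasSum (fun n : ℕ => x ^ (n + 2) / (((n : ℝ) + 2) * ((n : ℝ) + 1)))
      (x + (1 - x) * log (1 - x)) := by
  rw [← Complex.hasSum_ofReal]
  push_cast
  rw [Complex.ofReal_log (by linarith [(abs_lt.1 hx).2]), Complex.ofReal_sub, Complex.ofReal_one]
  exact Complex.hasSum_pow_add_two_div (by simpa using hx)

lemma Real.tsum_pow_div_mul_sub_one_tail {x : ℝ} (hx : |x| < 1) (N : ℕ) :
    ∑' n : ℕ, x ^ (n + N) / (((n : ℝ) + N) * ((n : ℝ) + N - 1)) =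
      x + (1 - x) * log (1 - x)
        - ∑ n ∈ Finset.Icc 2 (N - 1), x ^ n / ((n : ℝ) * ((n : ℝ) - 1)) := by
  set a : ℕ → ℝ := fun n => x ^ n / ((n : ℝ) * ((n : ℝ) - 1))
  -- the junk values `a 0 = a 1 = 0` let the series start at `n = 0`
  have ha : HasSum a (x + (1 - x) * log (1 - x)) := by
    refine (hasSum_nat_add_iff' 2).1 ?_
    rw [Finset.sum_range_succ, Finset.sum_range_one]
    simp only [a, CharP.cast_eq_zero, Nat.cast_one, zero_mul, div_zero, sub_self, mul_zero,
      add_zero, sub_zero]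
    refine (Real.hasSum_pow_add_two_div hx).congr_fun fun n => ?_
    push_cast
    ring
  have hsum : ∑ n ∈ Finset.Icc 2 (N - 1), a n = ∑ n ∈ Finset.range N, a n := by
    refine Finset.sum_subset (fun n hn => ?_) (fun n hn hn' => ?_)
    · simp only [Finset.mem_Icc, Finset.mem_range] at hn ⊢; omega
    · simp only [Finset.mem_Icc, Finset.mem_range, not_and_or, not_le] at hn hn'
      obtain rfl | rfl : n = 0 ∨ n = 1 := by omega
      all_goals simp [a]
  rw [hsum, ← ((hasSum_nat_add_iff' N).2 ha).tsum_eq]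
  push_cast [a]
  rfl

lemma natCast_mul_natCast_sub_one_nonneg (k : ℕ) : 0 ≤ (k : ℝ) * ((k : ℝ) - 1) := by
  rcases k.eq_zero_or_pos with rfl | hk
  · simp
  · exact mul_nonneg k.cast_nonneg (sub_nonneg.2 (Nat.one_le_cast.2 hk))

lemma Complex.norm_mul_log_le (w : ℂ) :
    ‖w * log w‖ ≤ |‖w‖ * Real.log ‖w‖| + Real.pi * ‖w‖ := by
  calc ‖w * log w‖ = ‖w‖ * ‖log w‖ := norm_mul _ _
    _ ≤ ‖w‖ * (|Real.log ‖w‖| + Real.pi) := by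
        gcongr
        calc ‖log w‖ ≤ |(log w).re| + |(log w).im| := norm_le_abs_re_add_abs_im _
          _ ≤ |Real.log ‖w‖| + Real.pi := by
              rw [log_re, log_im]
              gcongr
              exact abs_arg_le_pi w
    _ = |‖w‖ * Real.log ‖w‖| + Real.pi * ‖w‖ := by
        rw [abs_mul, abs_norm]
        ring

lemma Complex.tendsto_mul_log_zero : Tendsto (fun w : ℂ => w * log w) (𝓝 0) (𝓝 0) := by
  refine squeeze_zero_norm norm_mul_log_le ?_
  have h : Continuous fun w : ℂ => |‖w‖ * Real.log ‖w‖| + Real.pi * ‖w‖ :=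
    (Real.continuous_mul_log.comp continuous_norm).abs.add
      (continuous_const.mul continuous_norm)
  simpa using h.tendsto 0

lemma Complex.continuousOn_mul_log :
    ContinuousOn (fun w : ℂ => w * log w) (insert 0 slitPlane) := by
  rintro w (rfl | hw)
  · rw [ContinuousWithinAt, zero_mul]
    exact tendsto_mul_log_zero.mono_left nhdsWithin_le_nhds
  · exact (continuousAt_id.mul (continuousAt_clog hw)).continuousWithinAt

lemma Complex.closedBall_one_one_subset : closedBall (1 : ℂ) 1 ⊆ insert 0 slitPlane := by
  intro w hw
  rcases eq_or_ne w 0 with rfl | hw₀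
  · exact Set.mem_insert _ _
  refine Set.mem_insert_of_mem _ (mem_slitPlane_iff.2 (Or.inl ?_))
  rw [mem_closedBall, dist_eq_norm, ← sq_le_one_iff₀ (norm_nonneg _), Complex.sq_norm,
    normSq_apply] at hw
  have : 0 < w.re * w.re + w.im * w.im := by
    rw [← normSq_apply]; exact normSq_pos.2 hw₀
  simp only [sub_re, one_re, sub_im, one_im] at hw
  nlinarith

section RadialLiminf

variable {E : Type*} [NormedAddCommGroup E] {u : E → ℝ} {D : ℝ}

lemma eventually_norm_mem_Ioo_comap_norm {a : ℝ} (ha : a < 1) :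
    ∀ᶠ z in comap (fun z : E => ‖z‖) (𝓝[<] 1), ‖z‖ ∈ Set.Ioo a 1 :=
  preimage_mem_comap (Ioo_mem_nhdsLT ha)

lemma isBoundedUnder_comap_norm [ProperSpace E] (hu : ContinuousOn u (closedBall 0 1)) :
    IsBoundedUnder (· ≤ ·) (comap (fun z : E => ‖z‖) (𝓝[<] 1)) u ∧
      IsBoundedUnder (· ≥ ·) (comap (fun z : E => ‖z‖) (𝓝[<] 1)) u := by
  obtain ⟨C, hC⟩ := (isCompact_closedBall (0 : E) 1).exists_bound_of_continuousOn hu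
  have h : ∀ᶠ z in comap (fun z : E => ‖z‖) (𝓝[<] 1), |u z| ≤ C := by
    filter_upwards [eventually_norm_mem_Ioo_comap_norm zero_lt_one] with z hz
    exact hC z (mem_closedBall_zero_iff.2 hz.2.le)
  exact ⟨⟨C, h.mono fun z hz => (abs_le.1 hz).2⟩,
    ⟨-C, h.mono fun z hz => (abs_le.1 hz).1⟩⟩

variable [NormedSpace ℝ E]

lemma tendsto_smul_comap_norm {ζ : E} (hζ : ‖ζ‖ = 1) :
    Tendsto (fun r : ℝ => r • ζ) (𝓝[<] 1) (comap (fun z : E => ‖z‖) (𝓝[<] 1)) := by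
  refine tendsto_comap_iff.2 (tendsto_id.congr' ?_)
  filter_upwards [Ioo_mem_nhdsLT (zero_lt_one' ℝ)] with r hr
  simp [norm_smul, hζ, abs_of_pos hr.1]

lemma neBot_comap_norm_nhdsLT_one [Nontrivial E] :
    NeBot (comap (fun z : E => ‖z‖) (𝓝[<] 1)) :=
  have ⟨_, hζ⟩ := exists_norm_eq E zero_le_one
  (tendsto_smul_comap_norm hζ).neBot

lemma dist_inv_norm_smul_self {z : E} (hz : 0 < ‖z‖) (hz₁ : ‖z‖ ≤ 1) :
    dist z (‖z‖⁻¹ • z) = 1 - ‖z‖ := by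
  rw [dist_eq_norm, ← one_smul ℝ z, smul_smul, ← sub_smul, one_smul, norm_smul,
    Real.norm_eq_abs, mul_one,
    abs_of_nonpos (by rw [sub_nonpos]; exact one_le_inv_iff₀.2 ⟨hz, hz₁⟩)]
  field_simp
  ring

variable [ProperSpace E]

/-- Uniform continuity on the closed ball compares `u z` with `u` at the radial projection
of `z` to the sphere. -/
lemma le_liminf_comap_norm [Nontrivial E] (hu : ContinuousOn u (closedBall 0 1))
    (hD : ∀ ζ ∈ sphere (0 : E) 1, D ≤ u ζ) :
    D ≤ liminf u (comap (fun z : E => ‖z‖) (𝓝[<] 1)) := by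
  have := neBot_comap_norm_nhdsLT_one (E := E)
  refine le_of_forall_pos_le_add fun ε hε => ?_
  obtain ⟨δ, hδ, huc⟩ := Metric.uniformContinuousOn_iff.1
    ((isCompact_closedBall (0 : E) 1).uniformContinuousOn_of_continuous hu) ε hε
  refine sub_le_iff_le_add.1
    (le_liminf_of_le (isBoundedUnder_comap_norm hu).1.isCoboundedUnder_ge ?_)
  filter_upwards [eventually_norm_mem_Ioo_comap_norm (max_lt (sub_lt_self 1 hδ) one_pos)]
    with z ⟨hz, hz₁⟩
  have hz₀ : 0 < ‖z‖ := (le_max_right _ _).trans_lt hz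
  have hζ : ‖z‖⁻¹ • z ∈ sphere (0 : E) 1 := by
    simp [norm_smul, hz₀.ne']
  have hclose := huc z (mem_closedBall_zero_iff.2 hz₁.le) _ (sphere_subset_closedBall hζ)
    (by rw [dist_inv_norm_smul_self hz₀ hz₁.le]; linarith [le_max_left (1 - δ) 0])
  linarith [hD _ hζ, (abs_lt.1 (Real.dist_eq _ _ ▸ hclose)).1]

lemma liminf_comap_norm_le (hu : ContinuousOn u (closedBall 0 1)) {ζ : E}
    (hζ : ζ ∈ sphere (0 : E) 1) :
    liminf u (comap (fun z : E => ‖z‖) (𝓝[<] 1)) ≤ u ζ := by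
  have hζ' : ‖ζ‖ = 1 := mem_sphere_zero_iff_norm.1 hζ
  have hball : Tendsto (fun r : ℝ => r • ζ) (𝓝[<] 1) (𝓝[closedBall 0 1] ζ) := by
    refine tendsto_nhdsWithin_of_tendsto_nhds_of_eventually_within _ ?_ ?_
    · simpa using ((continuous_id.smul continuous_const).tendsto (1 : ℝ)).mono_left
        (nhdsWithin_le_nhds (s := Set.Iio 1)) (f := fun r : ℝ => r • ζ)
    · filter_upwards [Ioo_mem_nhdsLT (zero_lt_one' ℝ)] with r hr
      simp [norm_smul, hζ', abs_of_pos hr.1, hr.2.le]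
  refine le_of_forall_pos_le_add fun ε hε => liminf_le_of_frequently_le ?_
    (isBoundedUnder_comap_norm hu).2
  refine (tendsto_smul_comap_norm hζ').frequently (Eventually.frequently ?_)
  filter_upwards [((hu ζ (sphere_subset_closedBall hζ)).tendsto.comp hball).eventually
    (eventually_le_nhds (lt_add_of_pos_right (u ζ) hε))] with r hr using hr

lemma liminf_comap_norm_eq_of_isLeast (hu : ContinuousOn u (closedBall 0 1))
    (hD : IsLeast (u '' sphere (0 : E) 1) D) :
    liminf u (comap (fun z : E => ‖z‖) (𝓝[<] 1)) = D := by
  obtain ⟨⟨ζ, hζ, rfl⟩, hle⟩ := hD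
  have : Nontrivial E := ⟨⟨ζ, 0, ne_zero_of_mem_unit_sphere ⟨ζ, hζ⟩⟩⟩
  exact le_antisymm (liminf_comap_norm_le hu hζ)
    (le_liminf_comap_norm hu fun ζ' hζ' => hle ⟨ζ', hζ', rfl⟩)

end RadialLiminf

noncomputable def fMClosed (M : ℝ) (z : ℂ) : ℂ :=
  (1 + 2 * M) * z + 2 * M * ((1 - z) * Complex.log (1 - z))

lemma fM_eq_fMClosed (M : ℝ) {z : ℂ} (hz : ‖z‖ < 1) : fM M z = fMClosed M z := by
  rw [fM, (Complex.hasSum_pow_add_two_div hz).tsum_eq, fMClosed]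
  ring

lemma fM_ofReal (M : ℝ) {x : ℝ} (hx : |x| < 1) :
    fM M x = ((x + 2 * M * (x + (1 - x) * Real.log (1 - x)) : ℝ) : ℂ) := by
  rw [fM_eq_fMClosed M (by simpa using hx), fMClosed, ← Complex.ofReal_one,
    ← Complex.ofReal_sub, ← Complex.ofReal_log (by linarith [(abs_lt.1 hx).2])]
  push_cast
  ring

lemma continuousOn_fMClosed (M : ℝ) : ContinuousOn (fMClosed M) (closedBall 0 1) := by
  have h : Set.MapsTo (fun z : ℂ => 1 - z) (closedBall 0 1) (insert 0 Complex.slitPlane) := by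
    intro z hz
    apply Complex.closedBall_one_one_subset
    simpa [dist_eq_norm, norm_sub_rev] using hz
  exact (continuousOn_const.mul continuousOn_id).add
    (continuousOn_const.mul (Complex.continuousOn_mul_log.comp (by fun_prop) h))

lemma le_norm_fMClosed {M : ℝ} (hM : 0 ≤ M) {ζ : ℂ} (hζ : ‖ζ‖ = 1) :
    1 + 2 * M * (1 - 2 * Real.log 2) ≤ ‖fMClosed M ζ‖ := by
  set w := 1 - ζ
  have hconj : ζ * conj ζ = 1 := by
    rw [Complex.mul_conj, Complex.normSq_eq_norm_sq, hζ]; norm_num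
  have hw : ‖w - 1‖ = 1 := by simpa [w] using hζ
  have hre : (fMClosed M ζ * conj ζ).re = 1 + 2 * M - 2 * M * (conj w * Complex.log w).re := by
    have : fMClosed M ζ * conj ζ = 1 + 2 * M - 2 * M * (conj w * Complex.log w) := by
      simp only [fMClosed, w, map_sub, map_one]
      linear_combination (1 + 2 * (M : ℂ) - 2 * M * Complex.log (1 - ζ)) * hconj
    rw [this]
    simp
  calc 1 + 2 * M * (1 - 2 * Real.log 2)
      ≤ 1 + 2 * M - 2 * M * (conj w * Complex.log w).re := by
        nlinarith [Complex.re_conj_mul_log_le hw]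
    _ ≤ ‖fMClosed M ζ‖ := by
        rw [← hre]
        simpa [hζ] using Complex.re_le_norm (fMClosed M ζ * conj ζ)

lemma fMClosed_neg_one (M : ℝ) :
    fMClosed M (-1) = ((-(1 + 2 * M) + 4 * M * Real.log 2 : ℝ) : ℂ) := by
  rw [fMClosed, show (1 : ℂ) - -1 = (2 : ℝ) by norm_num, ← Complex.ofReal_log zero_le_two]
  push_cast
  ring

lemma bdyDist_fM {M : ℝ} (hM : 0 ≤ M) (hD : 0 ≤ 1 + 2 * M * (1 - 2 * Real.log 2)) :
    bdyDist (fM M) = 1 + 2 * M * (1 - 2 * Real.log 2) := by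
  have hfM₀ : fM M 0 = 0 := by simp [fM]
  have hclosed : ∀ᶠ z in comap (fun z : ℂ => ‖z‖) (𝓝[<] 1),
      ‖fM M z - fM M 0‖ = ‖fMClosed M z‖ := by
    filter_upwards [eventually_norm_mem_Ioo_comap_norm zero_lt_one] with z hz
    rw [hfM₀, sub_zero, fM_eq_fMClosed M hz.2]
  rw [bdyDist, liminf_congr hclosed]
  refine liminf_comap_norm_eq_of_isLeast
    (continuousOn_fMClosed M).norm ⟨⟨-1, by simp, ?_⟩, ?_⟩
  · show ‖fMClosed M (-1)‖ = _
    rw [fMClosed_neg_one, Complex.norm_real, Real.norm_eq_abs,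
      abs_of_nonpos (by linarith)]
    ring
  · rintro _ ⟨ζ, hζ, rfl⟩
    exact le_norm_fMClosed hM (mem_sphere_zero_iff_norm.1 hζ)

theorem bohr_rogosinski_sq_sharp_general (M : ℝ) (hM : 0 < M) (N : ℕ)
    (r₀ : ℝ) (hr₀ : r₀ ∈ Set.Ioo (0 : ℝ) 1)
    (hroot : (r₀ + 2 * M * (r₀ + (1 - r₀) * Real.log (1 - r₀))) ^ 2 - 1
      + 2 * M * (r₀ - 1 + (1 - r₀) * Real.log (1 - r₀)
        - ∑ n ∈ Finset.Icc 2 (N - 1), r₀ ^ n / ((n : ℝ) * ((n : ℝ) - 1)) + 2 * Real.log 2) = 0) :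
    ((‖fM M (r₀ : ℂ)‖) ^ 2
        + ∑' n : ℕ, (2 * M / (((n : ℝ) + N) * ((n : ℝ) + N - 1))) * r₀ ^ (n + N)
      = 1 + 2 * M * (1 - 2 * Real.log 2)) ∧
    bdyDist (fM M) = 1 + 2 * M * (1 - 2 * Real.log 2) := by
  have hr : |r₀| < 1 := abs_lt.2 ⟨by linarith [hr₀.1], hr₀.2⟩
  have htail : ∑' n : ℕ, (2 * M / (((n : ℝ) + N) * ((n : ℝ) + N - 1))) * r₀ ^ (n + N) =
      2 * M * (r₀ + (1 - r₀) * Real.log (1 - r₀)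
        - ∑ n ∈ Finset.Icc 2 (N - 1), r₀ ^ n / ((n : ℝ) * ((n : ℝ) - 1))) := by
    rw [← Real.tsum_pow_div_mul_sub_one_tail hr N, ← tsum_mul_left]
    exact tsum_congr fun n => by ring
  have hsum : ‖fM M r₀‖ ^ 2
      + ∑' n : ℕ, (2 * M / (((n : ℝ) + N) * ((n : ℝ) + N - 1))) * r₀ ^ (n + N)
      = 1 + 2 * M * (1 - 2 * Real.log 2) := by
    rw [fM_ofReal M hr, Complex.norm_real, Real.norm_eq_abs, sq_abs, htail]
    linear_combination hroot
  refine ⟨hsum, bdyDist_fM hM.le (hsum ▸ add_nonneg (sq_nonneg _) (tsum_nonneg fun n => ?_))⟩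
  have hk := natCast_mul_natCast_sub_one_nonneg (n + N)
  push_cast at hk
  exact mul_nonneg (div_nonneg (by positivity) hk) (pow_nonneg hr₀.1.le _)

/-- Sharpness of the radius of Theorem 2.4: equality for the extremal function `f_M`. -/
theorem bohr_rogosinski_sq_sharp (M : ℝ) (hM : 0 < M) (N : ℕ) (hN : 2 ≤ N)
    (r₀ : ℝ) (hr₀ : r₀ ∈ Set.Ioo (0 : ℝ) 1)
    (hroot : (r₀ + 2 * M * (r₀ + (1 - r₀) * Real.log (1 - r₀))) ^ 2 - 1
      + 2 * M * (r₀ - 1 + (1 - r₀) * Real.log (1 - r₀)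
        - ∑ n ∈ Finset.Icc 2 (N - 1), r₀ ^ n / ((n : ℝ) * ((n : ℝ) - 1)) + 2 * Real.log 2) = 0) :
    ((‖fM M (r₀ : ℂ)‖) ^ 2
        + ∑' n : ℕ, (2 * M / (((n : ℝ) + N) * ((n : ℝ) + N - 1))) * r₀ ^ (n + N)
      = 1 + 2 * M * (1 - 2 * Real.log 2)) ∧
    bdyDist (fM M) = 1 + 2 * M * (1 - 2 * Real.log 2) :=
  bohr_rogosinski_sq_sharp_general M hM N r₀ hr₀ hroot
end
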